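/- Fix η ∈ (0,1]. There exists N (depending on η) such that for all n ≥ N the following holds: whenever 0 < x ≤ √n and (1+η)x ≤ y < n, setting s := -Φ⁻¹(x/n) and t := -Φ⁻¹(y/n), one has s·(s − t) ≥ (3/5)·log(y/x). -/

import Mathlib

open Filter Set

/-- The standard normal cumulative distribution function
`Φ(t) = ∫_{-∞}^t e^{-z²/2}/√(2π) dz`. -/
noncomputable def stdNormalCDF (t : ℝ) : ℝ :=
  ∫ z in Set.Iic t, Real.exp (-z ^ 2 / 2) / Real.sqrt (2 * Real.pi)

/-- The inverse function `Φ⁻¹ : (0,1) → ℝ` of the standard normal CDF. -/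
noncomputable def stdNormalCDFInv : ℝ → ℝ :=
  Function.invFun stdNormalCDF

/-- The lower-tail quantile scale `s_n(x) = -Φ⁻¹(x/n)`, defined for `0 < x < n`. -/
noncomputable def sQ (n : ℕ) (x : ℝ) : ℝ :=
  -stdNormalCDFInv (x / n)

section Aux

open MeasureTheory Real

/-- The standard normal density. -/
noncomputable def gss (z : ℝ) : ℝ := Real.exp (-z ^ 2 / 2) / Real.sqrt (2 * Real.pi)

/-- `Phi t = ∫_{Iic t} gss`. -/
noncomputable def Phi (t : ℝ) : ℝ := ∫ z in Set.Iic t, gss z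

lemma gss_pos (z : ℝ) : 0 < gss z := by unfold gss; positivity

lemma exp_sq_integrable : Integrable (fun z : ℝ => Real.exp (-z ^ 2 / 2)) := by
  have h : Integrable (fun z : ℝ => Real.exp (-(1/2) * z ^ 2)) :=
    integrable_exp_neg_mul_sq (by norm_num)
  convert h using 2 with z; ring_nf

lemma gss_integrable : Integrable gss := exp_sq_integrable.div_const _

lemma gss_total : ∫ z, gss z = 1 := by
  unfold gss
  rw [integral_div]
  have h := integral_gaussian (1/2 : ℝ)
  have h2 : ∫ z : ℝ, Real.exp (-z ^ 2 / 2) = Real.sqrt (2 * Real.pi) := by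
    rw [show (fun z : ℝ => Real.exp (-z^2/2)) = fun z : ℝ => Real.exp (-(1/2) * z^2) by
      funext z; ring_nf] at *
    rw [h]; congr 1; ring
  rw [h2, div_self (by positivity)]

lemma gss_even (z : ℝ) : gss (-z) = gss z := by unfold gss; ring_nf

lemma Phi_neg_eq (s : ℝ) : Phi (-s) = ∫ z in Set.Ioi s, gss z := by
  unfold Phi
  rw [← integral_comp_neg_Ioi]
  simp only [gss_even]

lemma Phi_sub (a b : ℝ) : Phi b - Phi a = ∫ z in a..b, gss z :=
  intervalIntegral.integral_Iic_sub_Iic gss_integrable.integrableOn gss_integrable.integrableOn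

lemma Phi_strictMono : StrictMono Phi := by
  intro a b hab
  have h := Phi_sub a b
  have hpos : 0 < ∫ z in a..b, gss z :=
    intervalIntegral.intervalIntegral_pos_of_pos gss_integrable.intervalIntegrable gss_pos hab
  linarith

lemma Phi_continuous : Continuous Phi := by
  have h : Continuous fun b => ∫ z in (0:ℝ)..b, gss z :=
    intervalIntegral.continuous_primitive (fun _ _ => gss_integrable.intervalIntegrable) 0
  have : Phi = fun b => (∫ z in (0:ℝ)..b, gss z) + Phi 0 := by
    funext b; have := Phi_sub 0 b; linarith
  rw [this]
  exact h.add continuous_const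

lemma Phi_compl (s : ℝ) : Phi s = 1 - Phi (-s) := by
  rw [Phi_neg_eq]
  have h : (∫ z in Set.Iic s, gss z) + ∫ z in Set.Ioi s, gss z = 1 := by
    rw [← gss_total]
    rw [← setIntegral_union (Set.Iic_disjoint_Ioi le_rfl) measurableSet_Ioi
      gss_integrable.integrableOn gss_integrable.integrableOn, Set.Iic_union_Ioi,
      setIntegral_univ]
  unfold Phi
  linarith

lemma Phi_pos (s : ℝ) : 0 < Phi s := by
  unfold Phi
  rw [setIntegral_pos_iff_support_of_nonneg_ae]
  · have hsupp : (Function.support gss) = Set.univ := by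
      ext z; simp [Function.mem_support, (gss_pos z).ne']
    rw [hsupp, Set.univ_inter]
    simp [Real.volume_Iic]
  · exact Filter.Eventually.of_forall fun z => (gss_pos z).le
  · exact gss_integrable.integrableOn

lemma Phi_lt_one (s : ℝ) : Phi s < 1 := by
  have h1 := Phi_pos (-s); have h2 := Phi_compl s; linarith

lemma exp_sq_tendsto : Tendsto (fun z : ℝ => Real.exp (-z ^ 2 / 2)) atTop (nhds 0) := by
  apply Real.tendsto_exp_atBot.comp
  apply Filter.Tendsto.atBot_div_const (by norm_num : (0:ℝ) < 2)
  apply Filter.tendsto_neg_atBot_iff.mpr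
  exact tendsto_pow_atTop (by norm_num)

lemma hd1 (z : ℝ) :
    HasDerivAt (fun w : ℝ => -Real.exp (-w ^ 2 / 2)) (z * Real.exp (-z ^ 2 / 2)) z := by
  have h : HasDerivAt (fun w : ℝ => -w ^ 2 / 2) (-z) z := by
    have := ((hasDerivAt_pow 2 z).neg).div_const 2
    exact this.congr_deriv (by ring)
  have := (h.exp).neg
  exact this.congr_deriv (by ring)

lemma integral_z_exp (s : ℝ) :
    ∫ z in Set.Ioi s, z * Real.exp (-z ^ 2 / 2) = Real.exp (-s ^ 2 / 2) := by
  have hint : IntegrableOn (fun z : ℝ => z * Real.exp (-z ^ 2 / 2)) (Set.Ioi s) := by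
    have h : Integrable (fun z : ℝ => z * Real.exp (-(1/2) * z ^ 2)) :=
      integrable_mul_exp_neg_mul_sq (by norm_num)
    have h2 : Integrable (fun z : ℝ => z * Real.exp (-z ^ 2 / 2)) := by
      convert h using 2 with z; ring_nf
    exact h2.integrableOn
  have := integral_Ioi_of_hasDerivAt_of_tendsto' (f := fun w : ℝ => -Real.exp (-w ^ 2 / 2))
    (fun x _ => hd1 x) hint (by simpa using exp_sq_tendsto.neg)
  rw [this]; ring

lemma mills_upper {t : ℝ} (ht : 0 < t) : Phi (-t) ≤ gss t / t := by
  rw [Phi_neg_eq]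
  have hmono : (∫ z in Set.Ioi t, gss z)
      ≤ ∫ z in Set.Ioi t, z * Real.exp (-z ^ 2 / 2) * (1 / (t * Real.sqrt (2 * Real.pi))) := by
    apply setIntegral_mono_on gss_integrable.integrableOn
    · have h : Integrable (fun z : ℝ => z * Real.exp (-z ^ 2 / 2)) := by
        have h2 : Integrable (fun z : ℝ => z * Real.exp (-(1/2) * z ^ 2)) :=
          integrable_mul_exp_neg_mul_sq (by norm_num)
        convert h2 using 2 with z; ring_nf
      exact (h.mul_const _).integrableOn
    · exact measurableSet_Ioi
    · intro z hz
      have hz' : t ≤ z := le_of_lt hz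
      unfold gss
      rw [div_eq_mul_one_div]
      have h2π : 0 < Real.sqrt (2 * Real.pi) := by positivity
      have key : 1 / Real.sqrt (2 * Real.pi) ≤ z * (1 / (t * Real.sqrt (2 * Real.pi))) := by
        rw [mul_one_div, div_le_div_iff₀ h2π (by positivity)]
        nlinarith
      nlinarith [Real.exp_pos (-z^2/2), mul_le_mul_of_nonneg_left key (Real.exp_pos (-z^2/2)).le]
  rw [integral_mul_const, integral_z_exp] at hmono
  calc (∫ z in Set.Ioi t, gss z)
      ≤ Real.exp (-t ^ 2 / 2) * (1 / (t * Real.sqrt (2 * Real.pi))) := hmono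
    _ = gss t / t := by unfold gss; field_simp

lemma hd2 (z : ℝ) : HasDerivAt (fun w : ℝ => w / (w ^ 2 + 1) * Real.exp (-w ^ 2 / 2))
    (Real.exp (-z ^ 2 / 2) * (2 / (z ^ 2 + 1) ^ 2 - 1)) z := by
  have hne : z ^ 2 + 1 ≠ 0 := by positivity
  have hu : HasDerivAt (fun w : ℝ => w / (w ^ 2 + 1))
      ((1 * (z ^ 2 + 1) - z * (2 * z)) / (z ^ 2 + 1) ^ 2) z := by
    have h1 : HasDerivAt (fun w : ℝ => w) 1 z := hasDerivAt_id z
    have h2 : HasDerivAt (fun w : ℝ => w ^ 2 + 1) (2 * z) z := by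
      simpa using (hasDerivAt_pow 2 z).add_const 1
    exact h1.div h2 hne
  have hv : HasDerivAt (fun w : ℝ => Real.exp (-w ^ 2 / 2)) (Real.exp (-z ^ 2 / 2) * (-z)) z := by
    have h : HasDerivAt (fun w : ℝ => -w ^ 2 / 2) (-z) z := by
      have := ((hasDerivAt_pow 2 z).neg).div_const 2
      exact this.congr_deriv (by ring)
    exact h.exp
  have := hu.mul hv
  refine this.congr_deriv ?_
  field_simp
  ring

lemma F_tendsto :
    Tendsto (fun z : ℝ => z / (z ^ 2 + 1) * Real.exp (-z ^ 2 / 2)) atTop (nhds 0) := by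
  apply tendsto_of_tendsto_of_tendsto_of_le_of_le' tendsto_const_nhds exp_sq_tendsto
  · filter_upwards [eventually_ge_atTop (0:ℝ)] with z hz
    positivity
  · filter_upwards [eventually_ge_atTop (0:ℝ)] with z hz
    have h1 : z / (z ^ 2 + 1) ≤ 1 := by
      rw [div_le_one (by positivity)]; nlinarith
    nlinarith [Real.exp_pos (-z^2/2), mul_le_mul_of_nonneg_right h1 (Real.exp_pos (-z^2/2)).le]

lemma mills_lower (s : ℝ) : s * gss s / (s ^ 2 + 1) ≤ Phi (-s) := by
  rw [Phi_neg_eq]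
  have hint : IntegrableOn
      (fun z : ℝ => Real.exp (-z ^ 2 / 2) * (2 / (z ^ 2 + 1) ^ 2 - 1)) (Set.Ioi s) := by
    apply Integrable.integrableOn
    apply exp_sq_integrable.mono'
    · apply Continuous.aestronglyMeasurable
      fun_prop (disch := intro z; positivity)
    · apply Filter.Eventually.of_forall
      intro z
      rw [Real.norm_eq_abs, abs_mul, abs_of_pos (Real.exp_pos _)]
      have h1 : 0 < (2:ℝ) / (z ^ 2 + 1) ^ 2 := by positivity
      have h2 : (2:ℝ) / (z ^ 2 + 1) ^ 2 ≤ 2 := by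
        rw [div_le_iff₀ (by positivity)]; nlinarith [sq_nonneg z, sq_nonneg (z^2)]
      have h3 : |2 / (z ^ 2 + 1) ^ 2 - 1| ≤ 1 := by rw [abs_le]; constructor <;> linarith
      nlinarith [Real.exp_pos (-z^2/2)]
  have hftc := integral_Ioi_of_hasDerivAt_of_tendsto'
    (f := fun w : ℝ => w / (w ^ 2 + 1) * Real.exp (-w ^ 2 / 2))
    (fun x _ => hd2 x) hint F_tendsto
  have hmono : (∫ z in Set.Ioi s, - (Real.exp (-z ^ 2 / 2) * (2 / (z ^ 2 + 1) ^ 2 - 1)))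
      ≤ ∫ z in Set.Ioi s, Real.exp (-z ^ 2 / 2) := by
    apply setIntegral_mono_on hint.neg exp_sq_integrable.integrableOn measurableSet_Ioi
    intro z _
    simp only [Pi.neg_apply]
    have h1 : 0 < (2:ℝ) / (z ^ 2 + 1) ^ 2 := by positivity
    nlinarith [Real.exp_pos (-z^2/2)]
  rw [integral_neg, hftc] at hmono
  simp only [zero_sub, neg_neg] at hmono
  have hgss : (∫ z in Set.Ioi s, gss z)
      = (∫ z in Set.Ioi s, Real.exp (-z ^ 2 / 2)) / Real.sqrt (2 * Real.pi) := by
    unfold gss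
    rw [← integral_div]
  rw [hgss]
  unfold gss
  have h2π : 0 < Real.sqrt (2 * Real.pi) := by positivity
  calc s * (Real.exp (-s ^ 2 / 2) / Real.sqrt (2 * Real.pi)) / (s ^ 2 + 1)
      = (s / (s ^ 2 + 1) * Real.exp (-s ^ 2 / 2)) / Real.sqrt (2 * Real.pi) := by ring
    _ ≤ (∫ z in Set.Ioi s, Real.exp (-z ^ 2 / 2)) / Real.sqrt (2 * Real.pi) := by gcongr

lemma sqrt_two_pi_ge_one : (1:ℝ) ≤ Real.sqrt (2 * Real.pi) := by
  rw [show (1:ℝ) = Real.sqrt 1 by simp]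
  apply Real.sqrt_le_sqrt
  nlinarith [Real.pi_gt_three]

lemma gss_le (z : ℝ) : gss z ≤ 1 := by
  unfold gss
  rw [div_le_one (by positivity)]
  calc Real.exp (-z^2/2) ≤ 1 := by
        rw [Real.exp_le_one_iff]; nlinarith [sq_nonneg z]
    _ ≤ Real.sqrt (2 * Real.pi) := sqrt_two_pi_ge_one

end Aux

lemma stdNormalCDF_eq : stdNormalCDF = Phi := rfl

lemma Phi_tail_le {u : ℝ} (hu : 0 < u) : Phi (-u) ≤ 1/u := by
  calc Phi (-u) ≤ gss u / u := mills_upper hu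
    _ ≤ 1/u := by gcongr; exact gss_le u

lemma Phi_surj {p : ℝ} (hp0 : 0 < p) (hp1 : p < 1) : ∃ z, Phi z = p := by
  have h1p : 0 < 1 - p := by linarith
  set a : ℝ := -(2/p) with ha
  set b : ℝ := 2/(1-p) with hb
  have hPa : Phi a < p := by
    have h1 : Phi a ≤ 1/(2/p) := Phi_tail_le (by positivity)
    have h2 : 1/(2/p) = p/2 := by field_simp
    linarith
  have hPb : p < Phi b := by
    have h1 : Phi (-b) ≤ 1/(2/(1-p)) := Phi_tail_le (by positivity)
    have h2 : 1/(2/(1-p)) = (1-p)/2 := by field_simp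
    have h3 := Phi_compl b
    linarith
  have hab : a ≤ b := by
    have : a < 0 := by rw [ha]; simp; positivity
    have : 0 < b := by rw [hb]; positivity
    linarith
  have hmem : p ∈ Set.Icc (Phi a) (Phi b) := ⟨hPa.le, hPb.le⟩
  obtain ⟨z, _, hz⟩ := intermediate_value_Icc hab Phi_continuous.continuousOn hmem
  exact ⟨z, hz⟩

lemma Phi_inv {p : ℝ} (hp0 : 0 < p) (hp1 : p < 1) : Phi (stdNormalCDFInv p) = p := by
  unfold stdNormalCDFInv
  rw [stdNormalCDF_eq]
  exact Function.invFun_eq (Phi_surj hp0 hp1)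

lemma log_gss (u : ℝ) :
    Real.log (gss u) = -u^2/2 - Real.log (Real.sqrt (2*Real.pi)) := by
  unfold gss
  rw [Real.log_div (Real.exp_pos _).ne'
    (Real.sqrt_pos.mpr (by positivity)).ne', Real.log_exp]

lemma arith_case1 {s t L : ℝ} (hs : 10 < s) (ht : t < 1) (hL : L ≤ s^2/2 + s + 1) :
    s * (s - t) ≥ 3/5 * L := by
  nlinarith [mul_pos (show (0:ℝ) < s by linarith) (show (0:ℝ) < 1 - t by linarith),
    mul_nonneg (show (0:ℝ) ≤ s - 10 by linarith) (show (0:ℝ) ≤ s by linarith)]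

lemma arith_case2 {s t L l : ℝ} (hs : 10 < s) (ht : 1 ≤ t) (hts : t < s)
    (hl0 : 0 < l) (hlL : l ≤ L)
    (hLup : L ≤ (s^2 - t^2)/2 + (s - t) + l/50) :
    s * (s - t) ≥ 3/5 * L := by
  rcases le_or_gt (l/5) (s-t) with hd | hd
  · nlinarith [sq_nonneg (s-t),
      mul_nonneg (show (0:ℝ) ≤ s - 10 by linarith) (show (0:ℝ) ≤ s - t by linarith)]
  · nlinarith [sq_nonneg (s-t)]

/-- Far-ratio quantile-gap bound: for fixed `η ∈ (0,1]`, eventually in `n`,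
whenever `0 < x ≤ √n` and `(1+η)x ≤ y < n`, with `s = -Φ⁻¹(x/n)` and
`t = -Φ⁻¹(y/n)`, one has `s(s−t) ≥ (3/5)log(y/x)`. -/
theorem quantile_gap_far_ratio (η : ℝ) (hη : η ∈ Set.Ioc (0 : ℝ) 1) :
    ∃ N : ℕ, ∀ n : ℕ, N ≤ n → ∀ x y : ℝ,
      0 < x → x ≤ Real.sqrt n → (1 + η) * x ≤ y → y < n →
      sQ n x * (sQ n x - sQ n y) ≥ (3 / 5) * Real.log (y / x) := by
  obtain ⟨hη0, hη1⟩ := hη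
  set ℓ := Real.log (1 + η) with hℓdef
  have hℓpos : 0 < ℓ := Real.log_pos (by linarith)
  have hℓ1 : ℓ ≤ 1 := by
    have h := Real.log_le_sub_one_of_pos (show (0:ℝ) < 1 + η by linarith)
    rw [hℓdef]; linarith only [h, hη1]
  set S : ℝ := 10 + 5 / ℓ with hSdef
  have h5ℓ : 0 < 5 / ℓ := by positivity
  have hS10 : 10 ≤ S := by rw [hSdef]; linarith only [h5ℓ]
  have hSl : 5 / ℓ ≤ S := by rw [hSdef]; linarith only []
  have hc0 : 0 < Phi (-S) := Phi_pos _
  obtain ⟨N₀, hN₀⟩ : ∃ N₀ : ℕ, 1 / (Phi (-S))^2 < N₀ := exists_nat_gt _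
  refine ⟨N₀ + 1, ?_⟩
  intro n hn x y hx hxn hxy hyn
  have hn1 : 1 ≤ n := le_trans (Nat.le_add_left 1 N₀) hn
  have hnR : (0:ℝ) < n := by exact_mod_cast hn1
  have hsn : 0 < Real.sqrt n := Real.sqrt_pos.mpr hnR
  have hsqn : 1 / Real.sqrt n < Phi (-S) := by
    have h1 : (1:ℝ)/(Phi (-S))^2 < n := by
      refine lt_of_lt_of_le hN₀ ?_
      exact_mod_cast le_trans (Nat.le_add_right N₀ 1) hn
    have h2 : 1 / Phi (-S) < Real.sqrt n := by
      rw [show (1:ℝ) / Phi (-S) = Real.sqrt ((1/Phi (-S))^2) by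
        rw [Real.sqrt_sq (by positivity)]]
      apply Real.sqrt_lt_sqrt (by positivity)
      rw [div_pow, one_pow]; exact h1
    rw [div_lt_iff₀ hsn]
    rw [div_lt_iff₀ hc0] at h2
    linarith only [h2, mul_comm (Real.sqrt (n:ℝ)) (Phi (-S))]
  set p := x / (n:ℝ) with hpdef
  set q := y / (n:ℝ) with hqdef
  have hy0 : 0 < y := by
    have h := mul_pos (show (0:ℝ) < 1 + η by linarith only [hη0]) hx
    linarith only [h, hxy]
  have hp0 : 0 < p := div_pos hx hnR
  have hq0 : 0 < q := div_pos hy0 hnR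
  have hq1 : q < 1 := (div_lt_one hnR).mpr hyn
  have hppq : (1 + η) * p ≤ q := by
    rw [hpdef, hqdef, show (1+η) * (x / n) = ((1+η)*x)/(n:ℝ) by ring]
    gcongr
  have hpc : p < Phi (-S) := by
    have hxx : p ≤ 1 / Real.sqrt n := by
      rw [hpdef, div_le_div_iff₀ hnR hsn]
      have h7 := mul_le_mul_of_nonneg_right hxn (Real.sqrt_nonneg (n:ℝ))
      have h8 := Real.mul_self_sqrt hnR.le
      linarith only [h7, h8]
    linarith only [hxx, hsqn]
  have hp1 : p < 1 := lt_trans hpc (Phi_lt_one _)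
  set s := sQ n x with hsdef
  set t := sQ n y with htdef
  have hPs : Phi (-s) = p := by
    rw [hsdef]; simp only [sQ, neg_neg]; rw [← hpdef]; exact Phi_inv hp0 hp1
  have hPt : Phi (-t) = q := by
    rw [htdef]; simp only [sQ, neg_neg]; rw [← hqdef]; exact Phi_inv hq0 hq1
  have hSs : S < s := by
    have h1 : Phi (-s) < Phi (-S) := by rw [hPs]; exact hpc
    have h2 := Phi_strictMono.lt_iff_lt.mp h1
    linarith only [h2]
  have hs10 : 10 < s := lt_of_le_of_lt hS10 hSs
  have hs0 : 0 < s := by linarith only [hs10]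
  have hts : t < s := by
    have hpq : p < q := by
      have h9 : p < (1+η) * p := by nlinarith only [hp0, hη0]
      linarith only [h9, hppq]
    have h1 : Phi (-s) < Phi (-t) := by rw [hPs, hPt]; exact hpq
    have h2 := Phi_strictMono.lt_iff_lt.mp h1
    linarith only [h2]
  have hyx : Real.log (y / x) = Real.log q - Real.log p := by
    rw [show y / x = q / p by rw [hpdef, hqdef]; field_simp]
    exact Real.log_div hq0.ne' hp0.ne'
  set L := Real.log q - Real.log p with hLdef
  have hLl : ℓ ≤ L := by
    have h1 : Real.log ((1+η) * p) ≤ Real.log q := Real.log_le_log (by positivity) hppq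
    rw [Real.log_mul (by positivity) hp0.ne'] at h1
    rw [hLdef, hℓdef]; linarith only [h1]
  rw [hyx]
  have hC0 : 0 ≤ Real.log (Real.sqrt (2*Real.pi)) := Real.log_nonneg sqrt_two_pi_ge_one
  have hC1 : Real.log (Real.sqrt (2*Real.pi)) ≤ 1 := by
    rw [Real.log_sqrt (by positivity)]
    have hexp2 : Real.exp 2 = Real.exp 1 * Real.exp 1 := by rw [← Real.exp_add]; norm_num
    have he : (2.7:ℝ) < Real.exp 1 := lt_trans (by norm_num) Real.exp_one_gt_d9
    have he2 : (7.29:ℝ) < Real.exp 1 * Real.exp 1 := by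
      nlinarith only [he, sq_nonneg (Real.exp 1 - 2.7)]
    have h2pi : 2 * Real.pi ≤ Real.exp 2 := by
      rw [hexp2]
      linarith only [he2, Real.pi_lt_d2]
    have h := Real.log_le_log (by positivity) h2pi
    rw [Real.log_exp] at h
    linarith only [h]
  have hlogp2 : -Real.log p ≤ s^2/2 + Real.log (s^2+1) - Real.log s
      + Real.log (Real.sqrt (2*Real.pi)) := by
    have h1 : s * gss s / (s^2+1) ≤ p := by rw [← hPs]; exact mills_lower s
    have hpos : 0 < s * gss s / (s^2+1) :=
      div_pos (mul_pos hs0 (gss_pos s)) (by positivity)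
    have h2 := Real.log_le_log hpos h1
    rw [Real.log_div (mul_pos hs0 (gss_pos s)).ne' (by positivity : (0:ℝ) < s^2+1).ne',
      Real.log_mul hs0.ne' (gss_pos s).ne', log_gss] at h2
    linarith only [h2]
  have hlogsq : Real.log (s^2+1) ≤ 2 * Real.log s + 1/s^2 := by
    have h1 : Real.log ((s^2+1)/s^2) ≤ (s^2+1)/s^2 - 1 :=
      Real.log_le_sub_one_of_pos (by positivity)
    rw [Real.log_div (by positivity : (0:ℝ) < s^2+1).ne'
      (by positivity : (0:ℝ) < s^2).ne'] at h1
    have h2 : Real.log (s^2) = 2 * Real.log s := by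
      rw [show s^2 = s^(2:ℕ) by norm_num, Real.log_pow]; push_cast; ring
    have h3 : (s^2+1)/s^2 - 1 = 1/s^2 := by field_simp; ring
    linarith only [h1, h2, h3]
  have hlogs : Real.log s ≤ s - 1 := Real.log_le_sub_one_of_pos hs0
  rcases lt_or_ge t 1 with hcase | hcase
  · -- t < 1
    have hlogq : Real.log q < 0 := Real.log_neg hq0 hq1
    have h1s : 1/s^2 ≤ 1 := by
      rw [div_le_one (by positivity)]
      nlinarith only [hs10]
    have hL2 : L ≤ s^2/2 + s + 1 := by
      rw [hLdef]
      linarith only [hlogq, hlogp2, hlogsq, hlogs, h1s, hC1]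
    exact arith_case1 hs10 hcase hL2
  · -- 1 ≤ t
    have ht0 : 0 < t := by linarith only [hcase]
    have hlogq : Real.log q ≤ -t^2/2 - Real.log (Real.sqrt (2*Real.pi)) - Real.log t := by
      have h1 : q ≤ gss t / t := by rw [← hPt]; exact mills_upper ht0
      have h2 := Real.log_le_log hq0 h1
      rw [Real.log_div (gss_pos t).ne' ht0.ne', log_gss] at h2
      linarith only [h2]
    have hBt : Real.log s - Real.log t ≤ s - t := by
      have h1 : Real.log (s/t) ≤ s/t - 1 := Real.log_le_sub_one_of_pos (by positivity)
      rw [Real.log_div hs0.ne' ht0.ne'] at h1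
      have h2 : s/t - 1 ≤ s - t := by
        have h4 : s/t ≤ s - t + 1 := by
          rw [div_le_iff₀ ht0]
          nlinarith only [mul_nonneg (show (0:ℝ) ≤ s - t by linarith only [hts])
            (show (0:ℝ) ≤ t - 1 by linarith only [hcase])]
        linarith only [h4]
      linarith only [h1, h2]
    have hεs : 1/s^2 ≤ ℓ/50 := by
      have h5 : 5/ℓ ≤ s := le_trans hSl hSs.le
      have h6 : 5 ≤ s * ℓ := by
        rw [div_le_iff₀ hℓpos] at h5; linarith only [h5]
      rw [div_le_div_iff₀ (by positivity) (by norm_num : (0:ℝ) < 50)]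
      nlinarith only [h6, hs10, hℓpos]
    have hLup : L ≤ (s^2 - t^2)/2 + (s-t) + ℓ/50 := by
      rw [hLdef]
      linarith only [hlogq, hlogp2, hlogsq, hBt, hεs]
    exact arith_case2 hs10 hcase hts hℓpos hLl hLup
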